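/- Let K_ℓ be a strictly increasing sequence of positive integers with K_0 = 0 and lim_{ℓ→∞} K_ℓ/K_{ℓ+1} = 0. Let b = 2^M·B with M, B positive integers and B odd, and fix 0 < α < M/log₂ b. Let x ∈ [0,1) have binary digits d_k(x), and suppose d_k(x) = 0 for all K_{ℓ−1}+1 ≤ k ≤ K_ℓ. Then for all n with K_{ℓ−1}/M < n ≤ 1 + αK_ℓ/M and all sufficiently large ℓ, the fractional part {x b^n} satisfies {x b^n} ≤ b·c^{K_ℓ} where c = ½ b^{α/M} < 1. -/

import Mathlib

/-!
Split `x` at the binary digit `K ℓ`. Since the digits `K (ℓ-1)+1, …, K ℓ` vanish, the head is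
a dyadic rational with denominator `2 ^ K (ℓ-1)`, and `K (ℓ-1) < M n` makes its product with
`b ^ n = 2 ^ (M n) B ^ n` an integer. So `{x b^n}` is at most the tail times `b ^ n`, the tail
is at most `2 ^ (-K ℓ)`, and `n ≤ 1 + α K ℓ / M` gives `b ^ n ≤ b · (b ^ (α / M)) ^ K ℓ`.
-/

open Filter Finset

noncomputable def binaryTerm (d : ℕ → ℕ) (k : ℕ) : ℝ := d (k + 1) / 2 ^ (k + 1)

section BinaryExpansion

variable {d : ℕ → ℕ}

lemma binaryTerm_nonneg (d : ℕ → ℕ) (k : ℕ) : 0 ≤ binaryTerm d k := by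
  unfold binaryTerm; positivity

lemma binaryTerm_add_le (hd : ∀ k, d k ≤ 1) (N k : ℕ) :
    binaryTerm d (k + N) ≤ (1 / 2) ^ N / 2 / 2 ^ k := by
  have hdk : (d (k + N + 1) : ℝ) ≤ 1 := by exact_mod_cast hd (k + N + 1)
  calc binaryTerm d (k + N) ≤ 1 / 2 ^ (k + N + 1) := by
        unfold binaryTerm; gcongr
    _ = (1 / 2) ^ N / 2 / 2 ^ k := by
        rw [one_div_pow, pow_succ, pow_add]; field_simp

lemma summable_binaryTerm (hd : ∀ k, d k ≤ 1) : Summable (binaryTerm d) := by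
  refine (summable_nat_add_iff 0).mp ?_
  exact (summable_geometric_two' 1).of_nonneg_of_le (fun k => binaryTerm_nonneg d _)
    (by simpa using binaryTerm_add_le hd 0)

lemma tsum_binaryTerm_nat_add_le (hd : ∀ k, d k ≤ 1) (N : ℕ) :
    ∑' k, binaryTerm d (k + N) ≤ (1 / 2) ^ N :=
  (Summable.tsum_le_tsum (binaryTerm_add_le hd N)
      ((summable_nat_add_iff N).mpr (summable_binaryTerm hd)) (summable_geometric_two' _)).trans_eq
    (tsum_geometric_two' _)

lemma sum_range_binaryTerm_eq_of_digits_eq_zero {N N' : ℕ} (hN : N ≤ N')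
    (hzero : ∀ k, N + 1 ≤ k → k ≤ N' → d k = 0) :
    ∑ k ∈ range N', binaryTerm d k = ∑ k ∈ range N, binaryTerm d k := by
  refine (sum_subset (range_subset_range.mpr hN) fun k hkN' hkN => ?_).symm
  simp only [mem_range, not_lt] at hkN' hkN
  simp [binaryTerm, hzero (k + 1) (by omega) (by omega)]

lemma sum_range_binaryTerm_mul_two_pow_eq_natCast {N m : ℕ} (hNm : N ≤ m) :
    (∑ k ∈ range N, binaryTerm d k) * 2 ^ m
      = ((∑ k ∈ range N, d (k + 1) * 2 ^ (m - (k + 1)) : ℕ) : ℝ) := by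
  rw [sum_mul]
  push_cast
  refine sum_congr rfl fun k hk => ?_
  have hkm : k + 1 ≤ m := by have := mem_range.mp hk; omega
  have h2m : (2 : ℝ) ^ m = 2 ^ (m - (k + 1)) * 2 ^ (k + 1) := by
    rw [← pow_add, Nat.sub_add_cancel hkm]
  rw [binaryTerm, h2m]
  field_simp

lemma fract_tsum_binaryTerm_mul_le (hd : ∀ k, d k ≤ 1) {N N' m : ℕ} (hN : N ≤ N')
    (hzero : ∀ k, N + 1 ≤ k → k ≤ N' → d k = 0) (hNm : N ≤ m) (q : ℕ) :
    Int.fract ((∑' k, binaryTerm d k) * (2 ^ m * q)) ≤ (1 / 2) ^ N' * (2 ^ m * q) := by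
  set tail := ∑' k, binaryTerm d (k + N')
  have hsplit : ∑' k, binaryTerm d k = (∑ k ∈ range N', binaryTerm d k) + tail :=
    ((summable_binaryTerm hd).sum_add_tsum_nat_add N').symm
  rw [hsplit, sum_range_binaryTerm_eq_of_digits_eq_zero hN hzero, add_mul, ← mul_assoc,
    sum_range_binaryTerm_mul_two_pow_eq_natCast hNm, ← Nat.cast_mul, Int.fract_natCast_add]
  have htail : 0 ≤ tail * (2 ^ m * q) :=
    mul_nonneg (tsum_nonneg fun k => binaryTerm_nonneg d _) (by positivity)
  calc Int.fract (tail * (2 ^ m * q)) ≤ tail * (2 ^ m * q) := by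
        have hfloor : (0 : ℝ) ≤ ⌊tail * (2 ^ m * q)⌋ := by
          exact_mod_cast Int.floor_nonneg.mpr htail
        linarith [Int.self_sub_floor (tail * (2 ^ m * q))]
    _ ≤ (1 / 2) ^ N' * (2 ^ m * q) := by
        gcongr; exact tsum_binaryTerm_nat_add_le hd N'

end BinaryExpansion

lemma pow_le_mul_rpow_pow {b t : ℝ} (hb : 1 ≤ b) {n K : ℕ} (hn : (n : ℝ) ≤ 1 + t * K) :
    b ^ n ≤ b * (b ^ t) ^ K := by
  calc b ^ n = b ^ (n : ℝ) := (Real.rpow_natCast b n).symm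
    _ ≤ b ^ (1 + t * K) := Real.rpow_le_rpow_of_exponent_le hb hn
    _ = b * (b ^ t) ^ K := by
        rw [Real.rpow_add (by linarith), Real.rpow_one, Real.rpow_mul (by linarith),
          Real.rpow_natCast]

theorem fract_xbn_small (K : ℕ → ℕ) (hKmono : StrictMono K)
    (b M B : ℕ) (hM : 0 < M) (hB : 0 < B) (hb : b = 2 ^ M * B)
    (α : ℝ)
    (d : ℕ → ℕ) (hd : ∀ k, d k ≤ 1)
    (x : ℝ) (hx : x = ∑' k : ℕ, (d (k + 1) : ℝ) / 2 ^ (k + 1)) :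
    ∃ L : ℕ, ∀ ℓ : ℕ, L ≤ ℓ →
      (∀ k : ℕ, K (ℓ - 1) + 1 ≤ k → k ≤ K ℓ → d k = 0) →
      ∀ n : ℕ, (K (ℓ - 1) : ℝ) / M < n → (n : ℝ) ≤ 1 + α * (K ℓ) / M →
        Int.fract (x * (b : ℝ) ^ n) ≤ (b : ℝ) * ((1 / 2) * (b : ℝ) ^ (α / M)) ^ (K ℓ) := by
  refine ⟨0, fun ℓ _ hzero n hn_low hn_high => ?_⟩
  have hKn : K (ℓ - 1) ≤ M * n := by
    rw [div_lt_iff₀ (by exact_mod_cast hM), mul_comm] at hn_low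
    exact_mod_cast hn_low.le
  have hbn : (b : ℝ) ^ n = 2 ^ (M * n) * (B ^ n : ℕ) := by
    rw [hb]; push_cast; rw [mul_pow, pow_mul]
  have hb1 : (1 : ℝ) ≤ b := by
    rw [hb]; exact_mod_cast Nat.one_le_iff_ne_zero.mpr (by positivity)
  calc Int.fract (x * (b : ℝ) ^ n) ≤ (1 / 2) ^ K ℓ * (b : ℝ) ^ n := by
        rw [hbn, hx]
        exact fract_tsum_binaryTerm_mul_le hd (hKmono.monotone (Nat.sub_le ℓ 1)) hzero hKn _
    _ ≤ (1 / 2) ^ K ℓ * ((b : ℝ) * ((b : ℝ) ^ (α / M)) ^ K ℓ) := by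
        gcongr
        exact pow_le_mul_rpow_pow hb1 (by rwa [mul_div_right_comm] at hn_high)
    _ = (b : ℝ) * ((1 / 2) * (b : ℝ) ^ (α / M)) ^ (K ℓ) := by
        rw [mul_pow]; ring
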